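/- Let k≥1. There exist constants 0<ε<1 and K≥1 (depending only on the model parameters and k) such that, almost surely in (G,z), for any |λ|,|η| ≤ ε one has ⟨‖σ⃗‖^{2k}⟩_{λ,η} ≤ K N^k(‖z̄‖^{2k} + ‖Ḡ‖_op^{2k} + 1 + h^{2k}). -/

import Mathlib

/-!
The bound is deterministic in the disorder. Write `s = ‖σ⃗‖²` and
`W = ‖z̄‖² + ‖Ḡ‖²_op + 1 + h²`. For `|λ|, |η| ≤ ε` the Hamiltonian is confined,
`X ≤ a N W - (κ/2) s`: the `u` and `ψ` terms are bounded through (G-3), while the `φ` and field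
terms are absorbed by half of the confinement. On the unit cube `X ≥ -b N W`, so the partition
function is at least `e^{-bNW}`. Splitting the moment integral at `s = T := c N W` gives
`⟨s^k⟩ ≤ T^k + k! (8/κ)^k`: above `T`, `s^k e^X ≤ k! (8/κ)^k e^{aNW - κT/4} e^{-κs/8}`, and
`T` is chosen so that `e^{aNW - κT/4}` times the Gaussian integral `e^{O(N)}` of the last factor
is below `e^{-bNW}`.
-/

open MeasureTheory ProbabilityTheory Real Filter

noncomputable section

/-- Law of the disorder `(G, z)`: i.i.d. standard gaussian matrix entries and
i.i.d. `N(0, Δ*)` noise. -/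
def disorder (M N : ℕ) (Δ : ℝ) : Measure ((Fin M → Fin N → ℝ) × (Fin M → ℝ)) :=
  (Measure.pi fun _ : Fin M => Measure.pi fun _ : Fin N => gaussianReal 0 1).prod
    (Measure.pi fun _ : Fin M => gaussianReal 0 Δ.toNNReal)

/-- `S_k(σ) = (Ḡ σ)_k` with `Ḡ = G/√N`. -/
def Sk {M N : ℕ} (G : Fin M → Fin N → ℝ) (σ : Fin N → ℝ) (k : Fin M) : ℝ :=
  (∑ i, G k i * σ i) / Real.sqrt (N : ℝ)

/-- Euclidean norm of a vector in `ℝⁿ`. -/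
def vnorm {n : ℕ} (s : Fin n → ℝ) : ℝ := Real.sqrt (∑ ℓ, (s ℓ) ^ 2)

/-- Euclidean norm of a replica configuration `σ⃗ ∈ (ℝ^N)ⁿ`. -/
def cnorm {n N : ℕ} (σv : Fin n → Fin N → ℝ) : ℝ := Real.sqrt (∑ ℓ, ∑ i, (σv ℓ i) ^ 2)

/-- Generalized overlap `R(σ⃗) = (1/N) Σ_i φ(σ_i¹,…,σ_iⁿ)`. -/
def Rgen {n N : ℕ} (φ : (Fin n → ℝ) → ℝ) (σv : Fin n → Fin N → ℝ) : ℝ :=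
  (∑ i, φ (fun ℓ => σv ℓ i)) / (N : ℝ)

/-- Generalized overlap `Q(σ⃗) = (1/N) Σ_k ψ(S_k(σ¹)+z_k,…,S_k(σⁿ)+z_k)`. -/
def Qgen {n M N : ℕ} (ψ : (Fin n → ℝ) → ℝ) (G : Fin M → Fin N → ℝ) (z : Fin M → ℝ)
    (σv : Fin n → Fin N → ℝ) : ℝ :=
  (∑ k, ψ (fun ℓ => Sk G (σv ℓ) k + z k)) / (N : ℝ)

/-- Hamiltonian `X_{N,λ,η}` of the coupled replicas. -/
def Xgen {n M N : ℕ} (u : ℝ → ℝ) (φ ψ : (Fin n → ℝ) → ℝ) (h κ lam η : ℝ)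
    (G : Fin M → Fin N → ℝ) (z : Fin M → ℝ) (σv : Fin n → Fin N → ℝ) : ℝ :=
  (∑ ℓ, ∑ k, u (Sk G (σv ℓ) k + z k)) + h * (∑ ℓ, ∑ i, σv ℓ i) -
    κ * (∑ ℓ, ∑ i, (σv ℓ i) ^ 2) + lam * (N : ℝ) * Rgen φ σv + η * (N : ℝ) * Qgen ψ G z σv

/-- Partition function `Z_{N,λ,η}`. -/
def Zgen {n M N : ℕ} (u : ℝ → ℝ) (φ ψ : (Fin n → ℝ) → ℝ) (h κ lam η : ℝ)
    (G : Fin M → Fin N → ℝ) (z : Fin M → ℝ) : ℝ :=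
  ∫ σv : Fin n → Fin N → ℝ, Real.exp (Xgen u φ ψ h κ lam η G z σv)

/-- Gibbs expectation `⟨·⟩_{λ,η}`. -/
def gibbsGen {n M N : ℕ} (u : ℝ → ℝ) (φ ψ : (Fin n → ℝ) → ℝ) (h κ lam η : ℝ)
    (G : Fin M → Fin N → ℝ) (z : Fin M → ℝ) (f : (Fin n → Fin N → ℝ) → ℝ) : ℝ :=
  (∫ σv : Fin n → Fin N → ℝ, f σv * Real.exp (Xgen u φ ψ h κ lam η G z σv)) /
    Zgen u φ ψ h κ lam η G z

/-- Free energy `F_N(λ,η)`. -/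
def Fgen {n M N : ℕ} (u : ℝ → ℝ) (φ ψ : (Fin n → ℝ) → ℝ) (h κ lam η : ℝ)
    (G : Fin M → Fin N → ℝ) (z : Fin M → ℝ) : ℝ :=
  (1 / (N : ℝ)) * Real.log (Zgen (n := n) u φ ψ h κ lam η G z)

/-- Operator norm of an `M × N` matrix acting on Euclidean spaces. -/
def opNorm {M N : ℕ} (A : Fin M → Fin N → ℝ) : ℝ :=
  ‖(LinearMap.toContinuousLinearMap (Matrix.toEuclideanLin (Matrix.of A)))‖

/-- Growth conditions (G-1)–(G-3) on `u`, `φ`, `ψ`. -/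
def Growth (n : ℕ) (u : ℝ → ℝ) (φ ψ : (Fin n → ℝ) → ℝ) (d η0 α : ℝ) : Prop :=
  (∀ s, u s ≤ 0 ∧ -(d * (1 + s ^ 2)) ≤ u s) ∧
  (∀ s, |deriv u s| ≤ d * (1 + |s|)) ∧
  (∀ s s', |φ s - φ s'| ≤ d * (1 + vnorm s + vnorm s') * vnorm (s - s')) ∧
  (∀ s s', |ψ s - ψ s'| ≤ d * (1 + vnorm s + vnorm s') * vnorm (s - s')) ∧
  (∀ s, |φ s| ≤ d * (1 + (vnorm s) ^ 2)) ∧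
  (∀ s, |ψ s| ≤ d * (1 + (vnorm s) ^ 2)) ∧
  ContDiff ℝ 2 φ ∧ ContDiff ℝ 2 ψ ∧
  (∀ (s : Fin n → ℝ) (l l' : Fin n),
    |fderiv ℝ (fun y => fderiv ℝ φ y (Pi.single l' 1)) s (Pi.single l 1)| ≤ d) ∧
  (∀ (s : Fin n → ℝ) (l l' : Fin n),
    |fderiv ℝ (fun y => fderiv ℝ ψ y (Pi.single l' 1)) s (Pi.single l 1)| ≤ d) ∧
  (∀ y : Fin n → ℝ, (∑ ℓ, u (y ℓ)) + η0 * |ψ y| ≤ α * d)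

open Finset

lemma pow_le_factorial_div_pow_mul_exp {β t : ℝ} (hβ : 0 < β) (ht : 0 ≤ t) (k : ℕ) :
    t ^ k ≤ k.factorial / β ^ k * exp (β * t) := by
  have h := pow_div_factorial_le_exp _ (mul_nonneg hβ.le ht) k
  rw [div_le_iff₀ (by positivity), mul_pow] at h
  rw [div_mul_eq_mul_div, le_div_iff₀ (by positivity)]
  linarith

lemma pow_mul_exp_le {β s T x A : ℝ} (hβ : 0 < β) (hs : 0 ≤ s) (hT : 0 ≤ T)
    (hx : x ≤ A - 4 * β * s) (k : ℕ) :
    s ^ k * exp x ≤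
      T ^ k * exp x + k.factorial / β ^ k * exp (A - 2 * β * T) * exp (-(β * s)) := by
  rcases le_or_gt s T with hsT | hTs
  · have : s ^ k * exp x ≤ T ^ k * exp x := by gcongr
    have : 0 ≤ k.factorial / β ^ k * exp (A - 2 * β * T) * exp (-(β * s)) := by positivity
    linarith
  · calc s ^ k * exp x ≤ k.factorial / β ^ k * exp (β * s) * exp (A - 4 * β * s) := by
          gcongr
          exact pow_le_factorial_div_pow_mul_exp hβ hs k
      _ ≤ k.factorial / β ^ k * exp (A - 2 * β * T) * exp (-(β * s)) := by
          have h : exp (β * s) * exp (A - 4 * β * s) ≤ exp (A - 2 * β * T) * exp (-(β * s)) := by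
            rw [← exp_add, ← exp_add, exp_le_exp]
            nlinarith
          simpa only [mul_assoc] using mul_le_mul_of_nonneg_left h (by positivity)
      _ ≤ _ := le_add_of_nonneg_left (by positivity)

lemma add_four_pow_le {a b c e : ℝ} (ha : 0 ≤ a) (hb : 0 ≤ b) (hc : 0 ≤ c) (he : 0 ≤ e)
    (k : ℕ) : (a + b + c + e) ^ k ≤ 4 ^ k * (a ^ k + b ^ k + c ^ k + e ^ k) := by
  rcases k with _ | k
  · norm_num
  have h := pow_sum_le_card_mul_sum_pow (s := univ) (f := ![a, b, c, e])
    (by intro i _; fin_cases i <;> assumption) k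
  simp only [Fin.sum_univ_four, card_univ, Fintype.card_fin, Matrix.cons_val] at h
  calc (a + b + c + e) ^ (k + 1)
      ≤ 4 ^ k * (a ^ (k + 1) + b ^ (k + 1) + c ^ (k + 1) + e ^ (k + 1)) := by exact_mod_cast h
    _ ≤ _ := by gcongr; exacts [by norm_num, by omega]

lemma abs_mul_sum_le {ι : Type*} (s : Finset ι) (c : ℝ) (f : ι → ℝ) :
    |c * ∑ i ∈ s, f i| ≤ |c| * ∑ i ∈ s, |f i| := by
  rw [abs_mul]
  exact mul_le_mul_of_nonneg_left (abs_sum_le_sum_abs _ _) (abs_nonneg c)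

lemma mul_le_sq_div_add {κ : ℝ} (hκ : 0 < κ) (a x : ℝ) : a * x ≤ a ^ 2 / κ + κ / 4 * x ^ 2 := by
  have h : a ^ 2 / κ + κ / 4 * x ^ 2 - a * x = (a - κ / 2 * x) ^ 2 / κ := by
    field_simp
    ring
  linarith [div_nonneg (sq_nonneg (a - κ / 2 * x)) hκ.le]

section Gibbs

variable {Ω : Type*} [MeasurableSpace Ω] {μ : Measure Ω} {X s : Ω → ℝ} {A B L β T : ℝ}

lemma integrable_exp_of_le (hX : Measurable X) (hs : ∀ ω, 0 ≤ s ω) (hβ : 0 < β)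
    (hXs : ∀ ω, X ω ≤ A - 4 * β * s ω) (hgauss : Integrable (fun ω => exp (-(β * s ω))) μ) :
    Integrable (fun ω => exp (X ω)) μ := by
  refine (hgauss.const_mul (exp A)).mono' (by fun_prop) (ae_of_all _ fun ω => ?_)
  rw [norm_of_nonneg (exp_pos _).le, ← exp_add]
  gcongr
  nlinarith [hXs ω, hs ω]

lemma exp_neg_le_integral_exp {S : Set Ω} (hS : MeasurableSet S) (hμS : μ S = 1)
    (hint : Integrable (fun ω => exp (X ω)) μ) (hXS : ∀ ω ∈ S, -B ≤ X ω) :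
    exp (-B) ≤ ∫ ω, exp (X ω) ∂μ := by
  have h := setIntegral_ge_of_const_le_real hS (by simp [hμS])
    (fun ω hω => exp_le_exp.mpr (hXS ω hω)) hint.integrableOn
  rw [measureReal_def, hμS, ENNReal.toReal_one, mul_one] at h
  exact h.trans (setIntegral_le_integral hint (ae_of_all _ fun _ => (exp_pos _).le))

theorem integral_pow_mul_exp_div_le (hs : ∀ ω, 0 ≤ s ω) (hβ : 0 < β) (hT0 : 0 ≤ T)
    (hXs : ∀ ω, X ω ≤ A - 4 * β * s ω) (hgauss : Integrable (fun ω => exp (-(β * s ω))) μ)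
    (hgauss_le : ∫ ω, exp (-(β * s ω)) ∂μ ≤ exp L) (hZ : exp (-B) ≤ ∫ ω, exp (X ω) ∂μ)
    (hT : A + B + L ≤ 2 * β * T) (k : ℕ) :
    (∫ ω, s ω ^ k * exp (X ω) ∂μ) / ∫ ω, exp (X ω) ∂μ ≤ T ^ k + k.factorial / β ^ k := by
  set Z := ∫ ω, exp (X ω) ∂μ
  have hZpos : 0 < Z := (exp_pos _).trans_le hZ
  have hint : Integrable (fun ω => exp (X ω)) μ := .of_integral_ne_zero hZpos.ne'
  set C := k.factorial / β ^ k * exp (A - 2 * β * T)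
  have htail : C * exp L ≤ k.factorial / β ^ k * Z := by
    calc C * exp L = k.factorial / β ^ k * exp (A - 2 * β * T + L) := by
          rw [exp_add]; ring
      _ ≤ k.factorial / β ^ k * exp (-B) := by gcongr; linarith
      _ ≤ k.factorial / β ^ k * Z := by gcongr
  have hnum : ∫ ω, s ω ^ k * exp (X ω) ∂μ ≤ T ^ k * Z + C * exp L := by
    calc ∫ ω, s ω ^ k * exp (X ω) ∂μ
        ≤ ∫ ω, (T ^ k * exp (X ω) + C * exp (-(β * s ω))) ∂μ :=
          integral_mono_of_nonneg (ae_of_all _ fun ω => by have := hs ω; positivity)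
            ((hint.const_mul _).add (hgauss.const_mul _))
            (ae_of_all _ fun ω => pow_mul_exp_le hβ (hs ω) hT0 (hXs ω) k)
      _ = T ^ k * Z + C * ∫ ω, exp (-(β * s ω)) ∂μ := by
          rw [integral_add (hint.const_mul _) (hgauss.const_mul _), integral_const_mul,
            integral_const_mul]
      _ ≤ T ^ k * Z + C * exp L := by gcongr
  rw [div_le_iff₀ hZpos]
  linarith

end Gibbs

lemma exp_neg_mul_sum {ι E : Type*} [Fintype ι] (β : ℝ) (F : E → ℝ) (x : ι → E) :
    exp (-(β * ∑ i, F (x i))) = ∏ i, exp (-(β * F (x i))) := by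
  rw [mul_sum, ← sum_neg_distrib, exp_sum]

section Gaussian

variable {ι E : Type*} [Fintype ι] [MeasureSpace E] [SigmaFinite (volume : Measure E)]

lemma integrable_exp_neg_mul_sum {β : ℝ} {F : E → ℝ}
    (hF : Integrable (fun y => exp (-(β * F y)))) :
    Integrable (fun x : ι → E => exp (-(β * ∑ i, F (x i)))) := by
  simp_rw [exp_neg_mul_sum, volume_pi]
  exact Integrable.fintype_prod (f := fun _ y => exp (-(β * F y))) fun _ => hF

lemma integral_exp_neg_mul_sum (β : ℝ) (F : E → ℝ) :
    ∫ x : ι → E, exp (-(β * ∑ i, F (x i))) = (∫ y, exp (-(β * F y))) ^ Fintype.card ι := by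
  simp_rw [exp_neg_mul_sum]
  exact integral_fintype_prod_volume_eq_pow (fun y => exp (-(β * F y)))

end Gaussian

lemma integrable_exp_neg_mul_sum_sq {ι ι' : Type*} [Fintype ι] [Fintype ι'] {β : ℝ}
    (hβ : 0 < β) :
    Integrable (fun x : ι → ι' → ℝ => exp (-(β * ∑ i, ∑ j, x i j ^ 2))) := by
  have h : Integrable (fun t : ℝ => exp (-(β * t ^ 2))) := by
    simpa only [neg_mul] using integrable_exp_neg_mul_sq hβ
  exact integrable_exp_neg_mul_sum (F := fun y : ι' → ℝ => ∑ j, y j ^ 2)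
    (integrable_exp_neg_mul_sum (F := fun t : ℝ => t ^ 2) h)

lemma integral_exp_neg_mul_sum_sq {ι ι' : Type*} [Fintype ι] [Fintype ι'] (β : ℝ) :
    ∫ x : ι → ι' → ℝ, exp (-(β * ∑ i, ∑ j, x i j ^ 2)) =
      √(π / β) ^ (Fintype.card ι * Fintype.card ι') := by
  rw [integral_exp_neg_mul_sum β (fun y : ι' → ℝ => ∑ j, y j ^ 2),
    integral_exp_neg_mul_sum β (fun t : ℝ => t ^ 2)]
  simp only [← neg_mul, integral_gaussian, ← pow_mul, mul_comm]

def cnormSq {n N : ℕ} (σv : Fin n → Fin N → ℝ) : ℝ := ∑ ℓ, ∑ i, σv ℓ i ^ 2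

lemma cnormSq_nonneg {n N : ℕ} (σv : Fin n → Fin N → ℝ) : 0 ≤ cnormSq σv := by
  unfold cnormSq; positivity

lemma cnorm_pow_two_mul {n N : ℕ} (σv : Fin n → Fin N → ℝ) (k : ℕ) :
    cnorm σv ^ (2 * k) = cnormSq σv ^ k := by
  rw [pow_mul, cnorm, sq_sqrt (by positivity), cnormSq]

lemma vnorm_sq {n : ℕ} (y : Fin n → ℝ) : vnorm y ^ 2 = ∑ ℓ, y ℓ ^ 2 :=
  sq_sqrt (by positivity)

lemma sum_abs_le_of_abs_le {ι : Type*} [Fintype ι] {m : ℕ} {f : (Fin m → ℝ) → ℝ} {d : ℝ}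
    (hf : ∀ y, |f y| ≤ d * (1 + vnorm y ^ 2)) (x : ι → Fin m → ℝ) :
    ∑ i, |f (x i)| ≤ d * (Fintype.card ι + ∑ i, ∑ ℓ, x i ℓ ^ 2) := by
  calc ∑ i, |f (x i)| ≤ ∑ i, d * (1 + ∑ ℓ, x i ℓ ^ 2) :=
        sum_le_sum fun i _ => by simpa only [vnorm_sq] using hf (x i)
    _ = _ := by rw [← mul_sum, sum_add_distrib]; simp

lemma integral_exp_neg_mul_cnormSq_le {n N : ℕ} (β : ℝ) :
    ∫ σv : Fin n → Fin N → ℝ, exp (-(β * cnormSq σv)) ≤ exp (n * log (max 1 √(π / β)) * N) := by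
  have hc : 0 < max 1 √(π / β) := lt_max_of_lt_left one_pos
  calc ∫ σv : Fin n → Fin N → ℝ, exp (-(β * cnormSq σv)) = √(π / β) ^ (n * N) := by
        have h := integral_exp_neg_mul_sum_sq (ι := Fin n) (ι' := Fin N) β
        rwa [Fintype.card_fin, Fintype.card_fin] at h
    _ ≤ max 1 √(π / β) ^ (n * N) := by gcongr; exact le_max_right _ _
    _ = exp (n * log (max 1 √(π / β)) * N) := by
        rw [mul_right_comm, ← Nat.cast_mul, exp_nat_mul, exp_log hc]

def unitCube (n N : ℕ) : Set (Fin n → Fin N → ℝ) :=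
  Set.univ.pi fun _ => Set.univ.pi fun _ => Set.Icc 0 1

lemma measurableSet_unitCube (n N : ℕ) : MeasurableSet (unitCube n N) :=
  .univ_pi fun _ => .univ_pi fun _ => measurableSet_Icc

lemma volume_unitCube (n N : ℕ) : volume (unitCube n N) = 1 := by
  simp only [unitCube, volume_pi_pi, Real.volume_Icc]
  simp

lemma sum_sum_le_of_mem_unitCube {n N : ℕ} {f : ℝ → ℝ} (hf : ∀ t ∈ Set.Icc (0 : ℝ) 1, f t ≤ 1)
    {σv : Fin n → Fin N → ℝ} (hσv : σv ∈ unitCube n N) : ∑ ℓ, ∑ i, f (σv ℓ i) ≤ n * N := by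
  calc ∑ ℓ, ∑ i, f (σv ℓ i) ≤ ∑ _ℓ : Fin n, ∑ _i : Fin N, (1 : ℝ) :=
        sum_le_sum fun ℓ _ => sum_le_sum fun i _ => hf _ (hσv ℓ trivial i trivial)
    _ = n * N := by simp

lemma sum_sq_Sk_le {M N : ℕ} (G : Fin M → Fin N → ℝ) (σ : Fin N → ℝ) :
    ∑ k, Sk G σ k ^ 2 ≤ opNorm (fun p i => G p i / √N) ^ 2 * ∑ i, σ i ^ 2 := by
  set L := LinearMap.toContinuousLinearMap
    (Matrix.toEuclideanLin (Matrix.of fun p i => G p i / √(N : ℝ)))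
  have hL : ∀ k, L (WithLp.toLp 2 σ) k = Sk G σ k := by
    intro k
    simp [L, Sk, Matrix.toEuclideanLin, Matrix.mulVec, dotProduct, sum_div, mul_div_right_comm]
  have h := pow_le_pow_left₀ (norm_nonneg _) (L.le_opNorm (WithLp.toLp 2 σ)) 2
  rw [mul_pow, EuclideanSpace.real_norm_sq_eq, EuclideanSpace.real_norm_sq_eq] at h
  simp only [hL] at h
  exact h

lemma sum_sq_Sk_add_le {M N : ℕ} (G : Fin M → Fin N → ℝ) (z : Fin M → ℝ) (σ : Fin N → ℝ) :
    ∑ k, (Sk G σ k + z k) ^ 2 ≤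
      2 * (opNorm (fun p i => G p i / √N) ^ 2 * ∑ i, σ i ^ 2 + ∑ k, z k ^ 2) := by
  calc ∑ k, (Sk G σ k + z k) ^ 2 ≤ ∑ k, 2 * (Sk G σ k ^ 2 + z k ^ 2) :=
        sum_le_sum fun k _ => by nlinarith [sq_nonneg (Sk G σ k - z k)]
    _ ≤ _ := by
      rw [← mul_sum, sum_add_distrib]
      gcongr
      exact sum_sq_Sk_le G σ

def disorderSize {M N : ℕ} (h : ℝ) (G : Fin M → Fin N → ℝ) (z : Fin M → ℝ) : ℝ :=
  ∑ j, (z j / √N) ^ 2 + opNorm (fun p i => G p i / √N) ^ 2 + 1 + h ^ 2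

section DisorderSize

variable {M N : ℕ} {h : ℝ} {G : Fin M → Fin N → ℝ} {z : Fin M → ℝ}

lemma one_le_disorderSize : 1 ≤ disorderSize h G z := by
  unfold disorderSize
  have : 0 ≤ ∑ j, (z j / √N) ^ 2 := by positivity
  nlinarith [sq_nonneg h, sq_nonneg (opNorm fun p i => G p i / √N)]

lemma abs_le_disorderSize : |h| ≤ disorderSize h G z := by
  unfold disorderSize
  have : 0 ≤ ∑ j, (z j / √N) ^ 2 := by positivity
  nlinarith [sq_abs h, sq_nonneg (|h| - 1), sq_nonneg (opNorm fun p i => G p i / √N)]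

lemma natCast_mul_opNorm_sq_add_le (hN : N ≠ 0) :
    N * opNorm (fun p i => G p i / √N) ^ 2 + ∑ k, z k ^ 2 ≤ N * disorderSize h G z := by
  have hN' : (0 : ℝ) < N := by positivity
  have hz : (N : ℝ) * ∑ j, (z j / √N) ^ 2 = ∑ k, z k ^ 2 := by
    simp only [mul_sum, div_pow, sq_sqrt hN'.le, mul_div_cancel₀ _ hN'.ne']
  unfold disorderSize
  nlinarith [sq_nonneg h]

end DisorderSize

section Hamiltonian

variable {n M N : ℕ} {u : ℝ → ℝ} {φ ψ : (Fin n → ℝ) → ℝ} {h κ lam η d α : ℝ}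
  {G : Fin M → Fin N → ℝ} {z : Fin M → ℝ}

lemma natCast_mul_Rgen (σv : Fin n → Fin N → ℝ) :
    (N : ℝ) * Rgen φ σv = ∑ i, φ (fun ℓ => σv ℓ i) := by
  rcases N.eq_zero_or_pos with rfl | hN
  · simp
  · rw [Rgen, mul_div_cancel₀ _ (by positivity)]

lemma natCast_mul_Qgen (hN : N ≠ 0) (σv : Fin n → Fin N → ℝ) :
    (N : ℝ) * Qgen ψ G z σv = ∑ k, ψ (fun ℓ => Sk G (σv ℓ) k + z k) := by
  rw [Qgen, mul_div_cancel₀ _ (by exact_mod_cast hN)]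

lemma Xgen_le {η0 : ℝ} (hN : N ≠ 0) (hκ : 0 < κ) (hd : 0 ≤ d)
    (hφ : ∀ y, |φ y| ≤ d * (1 + vnorm y ^ 2))
    (hG3 : ∀ y : Fin n → ℝ, ∑ ℓ, u (y ℓ) + η0 * |ψ y| ≤ α * d)
    (hlam : |lam| ≤ 1) (hlamd : |lam| * d ≤ κ / 4) (hη : |η| ≤ η0)
    (σv : Fin n → Fin N → ℝ) :
    Xgen u φ ψ h κ lam η G z σv ≤
      M * (α * d) + N * (d + n * (h ^ 2 / κ)) - κ / 2 * cnormSq σv := by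
  have hU : ∑ ℓ, ∑ k, u (Sk G (σv ℓ) k + z k) + η * (N * Qgen ψ G z σv) ≤ M * (α * d) := by
    rw [natCast_mul_Qgen hN, sum_comm, mul_sum, ← sum_add_distrib]
    calc _ ≤ ∑ _k : Fin M, α * d := sum_le_sum fun k _ => ?_
      _ = _ := by simp
    set y := fun ℓ => Sk G (σv ℓ) k + z k
    have hηψ : η * ψ y ≤ η0 * |ψ y| := by
      calc η * ψ y ≤ |η| * |ψ y| := by rw [← abs_mul]; exact le_abs_self _
        _ ≤ η0 * |ψ y| := by gcongr
    linarith [hG3 y]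
  have hR : lam * (N * Rgen φ σv) ≤ d * N + κ / 4 * cnormSq σv := by
    have hsum : ∑ i, |φ fun ℓ => σv ℓ i| ≤ d * (N + cnormSq σv) := by
      have h := sum_abs_le_of_abs_le hφ (fun i ℓ => σv ℓ i)
      rwa [Fintype.card_fin, sum_comm] at h
    rw [natCast_mul_Rgen]
    calc _ ≤ |lam| * ∑ i, |φ (fun ℓ => σv ℓ i)| := (le_abs_self _).trans (abs_mul_sum_le _ _ _)
      _ ≤ |lam| * (d * (N + cnormSq σv)) := by gcongr
      _ ≤ d * N + κ / 4 * cnormSq σv := by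
        nlinarith [mul_le_mul_of_nonneg_right hlam (mul_nonneg hd N.cast_nonneg),
          mul_le_mul_of_nonneg_right hlamd (cnormSq_nonneg σv)]
  have hH : h * ∑ ℓ, ∑ i, σv ℓ i ≤ n * (N * (h ^ 2 / κ)) + κ / 4 * cnormSq σv := by
    calc h * ∑ ℓ, ∑ i, σv ℓ i = ∑ ℓ, ∑ i, h * σv ℓ i := by simp only [mul_sum]
      _ ≤ ∑ ℓ : Fin n, ∑ i : Fin N, (h ^ 2 / κ + κ / 4 * σv ℓ i ^ 2) :=
        sum_le_sum fun ℓ _ => sum_le_sum fun i _ => mul_le_sq_div_add hκ h _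
      _ = _ := by simp [sum_add_distrib, ← mul_sum, cnormSq]
  simp only [Xgen, mul_assoc] at hU hR ⊢
  unfold cnormSq at hR hH ⊢
  linarith

lemma neg_le_Xgen (hN : N ≠ 0) (hu : ∀ s, -(d * (1 + s ^ 2)) ≤ u s)
    (hφ : ∀ y, |φ y| ≤ d * (1 + vnorm y ^ 2)) (hψ : ∀ y, |ψ y| ≤ d * (1 + vnorm y ^ 2))
    (hlam : |lam| ≤ 1) (hη : |η| ≤ 1) (σv : Fin n → Fin N → ℝ) :
    -(d * ((n + 1) * M + 2 * ∑ ℓ, ∑ k, (Sk G (σv ℓ) k + z k) ^ 2 + N + cnormSq σv) +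
        |h| * ∑ ℓ, ∑ i, |σv ℓ i| + κ * cnormSq σv) ≤ Xgen u φ ψ h κ lam η G z σv := by
  set Y := ∑ ℓ, ∑ k, (Sk G (σv ℓ) k + z k) ^ 2
  have hU : -(d * (n * M + Y)) ≤ ∑ ℓ, ∑ k, u (Sk G (σv ℓ) k + z k) := by
    calc -(d * (n * M + Y)) = ∑ ℓ, ∑ k, -(d * (1 + (Sk G (σv ℓ) k + z k) ^ 2)) := by
          simp [Y, sum_add_distrib, mul_sum, mul_add]
          ring
      _ ≤ _ := sum_le_sum fun ℓ _ => sum_le_sum fun k _ => hu _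
  have hQ : |η * (N * Qgen ψ G z σv)| ≤ d * (M + Y) := by
    have hsum := sum_abs_le_of_abs_le hψ (fun k ℓ => Sk G (σv ℓ) k + z k)
    rw [Fintype.card_fin, sum_comm] at hsum
    rw [natCast_mul_Qgen hN]
    refine (abs_mul_sum_le _ _ _).trans ?_
    nlinarith [abs_nonneg η, sum_nonneg fun k (_ : k ∈ univ) =>
      abs_nonneg (ψ fun ℓ => Sk G (σv ℓ) k + z k)]
  have hR : |lam * (N * Rgen φ σv)| ≤ d * (N + cnormSq σv) := by
    have hsum : ∑ i, |φ fun ℓ => σv ℓ i| ≤ d * (N + cnormSq σv) := by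
      have h := sum_abs_le_of_abs_le hφ (fun i ℓ => σv ℓ i)
      rwa [Fintype.card_fin, sum_comm] at h
    rw [natCast_mul_Rgen]
    refine (abs_mul_sum_le _ _ _).trans ?_
    nlinarith [abs_nonneg lam, sum_nonneg fun i (_ : i ∈ univ) =>
      abs_nonneg (φ fun ℓ => σv ℓ i)]
  have hH : |h * ∑ ℓ, ∑ i, σv ℓ i| ≤ |h| * ∑ ℓ, ∑ i, |σv ℓ i| := by
    refine (abs_mul_sum_le _ _ _).trans ?_
    gcongr with ℓ
    exact abs_sum_le_sum_abs _ _
  simp only [Xgen, mul_assoc] at hQ hR hH ⊢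
  unfold cnormSq at hR ⊢
  linarith [neg_abs_le (η * (N * Qgen ψ G z σv)), neg_abs_le (lam * (N * Rgen φ σv)),
    neg_abs_le (h * ∑ ℓ, ∑ i, σv ℓ i)]

lemma Xgen_le_disorderSize {η0 : ℝ} (hN : N ≠ 0) (hM : (M : ℝ) ≤ α * N) (hα : 0 ≤ α)
    (hκ : 0 < κ) (hd : 0 ≤ d) (hφ : ∀ y, |φ y| ≤ d * (1 + vnorm y ^ 2))
    (hG3 : ∀ y : Fin n → ℝ, ∑ ℓ, u (y ℓ) + η0 * |ψ y| ≤ α * d)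
    (hlam : |lam| ≤ 1) (hlamd : |lam| * d ≤ κ / 4) (hη : |η| ≤ η0)
    (σv : Fin n → Fin N → ℝ) :
    Xgen u φ ψ h κ lam η G z σv ≤
      (α ^ 2 * d + d + n * (h ^ 2 / κ)) * N * disorderSize h G z - κ / 2 * cnormSq σv := by
  have hX := Xgen_le (G := G) (z := z) (h := h) hN hκ hd hφ hG3 hlam hlamd hη σv
  have hMα : M * (α * d) ≤ α ^ 2 * d * N := by
    nlinarith [mul_le_mul_of_nonneg_right hM (mul_nonneg hα hd)]
  have hW : (α ^ 2 * d + d + n * (h ^ 2 / κ)) * N ≤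
      (α ^ 2 * d + d + n * (h ^ 2 / κ)) * N * disorderSize h G z :=
    le_mul_of_one_le_right (by positivity) one_le_disorderSize
  nlinarith

lemma neg_le_Xgen_of_mem_unitCube (hN : N ≠ 0) (hM : (M : ℝ) ≤ α * N) (hκ : 0 ≤ κ)
    (hd : 0 ≤ d) (hu : ∀ s, -(d * (1 + s ^ 2)) ≤ u s)
    (hφ : ∀ y, |φ y| ≤ d * (1 + vnorm y ^ 2)) (hψ : ∀ y, |ψ y| ≤ d * (1 + vnorm y ^ 2))
    (hlam : |lam| ≤ 1) (hη : |η| ≤ 1) {σv : Fin n → Fin N → ℝ} (hσv : σv ∈ unitCube n N) :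
    -((d * ((n + 1) * α + 5 * n + 1) + n * (1 + κ)) * N * disorderSize h G z) ≤
      Xgen u φ ψ h κ lam η G z σv := by
  set W := disorderSize h G z
  set g := opNorm (fun p i => G p i / √N)
  have hs : cnormSq σv ≤ n * N :=
    sum_sum_le_of_mem_unitCube (f := (· ^ 2)) (fun t ht => by nlinarith [ht.1, ht.2]) hσv
  have habs : ∑ ℓ, ∑ i, |σv ℓ i| ≤ n * N :=
    sum_sum_le_of_mem_unitCube (fun t ht => by rw [abs_of_nonneg ht.1]; exact ht.2) hσv
  have hY : ∑ ℓ, ∑ k, (Sk G (σv ℓ) k + z k) ^ 2 ≤ 2 * n * (N * W) := by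
    calc ∑ ℓ, ∑ k, (Sk G (σv ℓ) k + z k) ^ 2
        ≤ ∑ ℓ, 2 * (g ^ 2 * ∑ i, σv ℓ i ^ 2 + ∑ k, z k ^ 2) :=
          sum_le_sum fun ℓ _ => sum_sq_Sk_add_le G z (σv ℓ)
      _ = 2 * (g ^ 2 * cnormSq σv + n * ∑ k, z k ^ 2) := by
          simp only [← mul_sum, sum_add_distrib, sum_const, card_univ, Fintype.card_fin,
            nsmul_eq_mul, cnormSq]
      _ ≤ 2 * n * (N * g ^ 2 + ∑ k, z k ^ 2) := by nlinarith [sq_nonneg g]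
      _ ≤ 2 * n * (N * W) := by gcongr; exact natCast_mul_opNorm_sq_add_le hN
  have hX := neg_le_Xgen (G := G) (z := z) (h := h) (κ := κ) hN hu hφ hψ hlam hη σv
  have hW : 1 ≤ W := one_le_disorderSize
  have hhW : |h| ≤ W := abs_le_disorderSize
  have hn : (0 : ℝ) ≤ n := n.cast_nonneg
  have hαN : 0 ≤ α * N := (M.cast_nonneg).trans hM
  have hNW : (N : ℝ) ≤ N * W := le_mul_of_one_le_right N.cast_nonneg hW
  have hdn : 0 ≤ d * (n + 1) := by positivity
  nlinarith [mul_le_mul_of_nonneg_left hM hdn, mul_le_mul_of_nonneg_left hY hd,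
    mul_le_mul_of_nonneg_left hs hd, mul_le_mul_of_nonneg_left hs hκ,
    mul_le_mul_of_nonneg_left habs (abs_nonneg h), mul_le_mul_of_nonneg_right hhW
      (mul_nonneg hn N.cast_nonneg), mul_le_mul_of_nonneg_left hNW (mul_nonneg hd hn),
    mul_le_mul_of_nonneg_left hNW (mul_nonneg hκ hn), mul_le_mul_of_nonneg_left hNW hd,
    mul_le_mul_of_nonneg_left hNW hn, mul_nonneg hdn (mul_nonneg hαN (sub_nonneg.mpr hW))]

end Hamiltonian

/-- `T = momentScale · N · W` is the threshold of the splitting: the numerator collects the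
confinement constant `a`, the cube constant `b` and the Gaussian normalisation, and
`κ / 4 = 2 β` with `β = κ / 8`. -/
def momentScale (n : ℕ) (α κ h d : ℝ) : ℝ :=
  (α ^ 2 * d + d + n * (h ^ 2 / κ) + (d * ((n + 1) * α + 5 * n + 1) + n * (1 + κ)) +
    n * log (max 1 √(π / (κ / 8)))) / (κ / 4)

lemma momentScale_nonneg {n : ℕ} {α κ h d : ℝ} (hα : 0 ≤ α) (hκ : 0 < κ) (hd : 0 ≤ d) :
    0 ≤ momentScale n α κ h d := by
  have := log_nonneg (le_max_left 1 √(π / (κ / 8)))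
  unfold momentScale
  positivity

theorem gibbsGen_cnorm_pow_le {n M N : ℕ} {u : ℝ → ℝ} {φ ψ : (Fin n → ℝ) → ℝ}
    {h κ lam η d α η0 : ℝ} {G : Fin M → Fin N → ℝ} {z : Fin M → ℝ}
    (hN : N ≠ 0) (hM : (M : ℝ) ≤ α * N) (hα : 0 ≤ α) (hκ : 0 < κ) (hd : 0 ≤ d)
    (huc : Continuous u) (hφc : Continuous φ) (hψc : Continuous ψ)
    (hu : ∀ s, -(d * (1 + s ^ 2)) ≤ u s)
    (hφ : ∀ y, |φ y| ≤ d * (1 + vnorm y ^ 2)) (hψ : ∀ y, |ψ y| ≤ d * (1 + vnorm y ^ 2))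
    (hG3 : ∀ y : Fin n → ℝ, ∑ ℓ, u (y ℓ) + η0 * |ψ y| ≤ α * d)
    (hlam : |lam| ≤ 1) (hlamd : |lam| * d ≤ κ / 4) (hη : |η| ≤ 1) (hηη0 : |η| ≤ η0) (k : ℕ) :
    gibbsGen u φ ψ h κ lam η G z (fun σv => cnorm σv ^ (2 * k)) ≤
      (momentScale n α κ h d * N * disorderSize h G z) ^ k + k.factorial / (κ / 8) ^ k := by
  set W := disorderSize h G z
  have hW : 1 ≤ W := one_le_disorderSize
  have hmom := momentScale_nonneg (n := n) (h := h) hα hκ hd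
  have hX : Continuous (Xgen u φ ψ h κ lam η G z) := by unfold Xgen Rgen Qgen Sk; fun_prop
  have hXs (σv : Fin n → Fin N → ℝ) : Xgen u φ ψ h κ lam η G z σv ≤
      (α ^ 2 * d + d + n * (h ^ 2 / κ)) * N * W - 4 * (κ / 8) * cnormSq σv :=
    (Xgen_le_disorderSize hN hM hα hκ hd hφ hG3 hlam hlamd hηη0 σv).trans_eq (by ring)
  have hgauss : Integrable fun σv : Fin n → Fin N → ℝ => exp (-(κ / 8 * cnormSq σv)) :=
    integrable_exp_neg_mul_sum_sq (by positivity)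
  have hZ := exp_neg_le_integral_exp (measurableSet_unitCube n N) (volume_unitCube n N)
    (integrable_exp_of_le hX.measurable cnormSq_nonneg (by positivity) hXs hgauss)
    fun σv hσv => neg_le_Xgen_of_mem_unitCube hN hM hκ.le hd hu hφ hψ hlam hη hσv
  have hT : (α ^ 2 * d + d + n * (h ^ 2 / κ)) * N * W +
      (d * ((n + 1) * α + 5 * n + 1) + n * (1 + κ)) * N * W +
      n * log (max 1 √(π / (κ / 8))) * N ≤ 2 * (κ / 8) * (momentScale n α κ h d * N * W) := by
    have hlog := log_nonneg (le_max_left 1 √(π / (κ / 8)))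
    have : n * log (max 1 √(π / (κ / 8))) * N ≤ n * log (max 1 √(π / (κ / 8))) * N * W :=
      le_mul_of_one_le_right (by positivity) hW
    have hscale : 2 * (κ / 8) * (momentScale n α κ h d * N * W) =
        (α ^ 2 * d + d + n * (h ^ 2 / κ) + (d * ((n + 1) * α + 5 * n + 1) + n * (1 + κ)) +
          n * log (max 1 √(π / (κ / 8)))) * N * W := by
      unfold momentScale
      field_simp
      ring
    linarith
  have h := integral_pow_mul_exp_div_le cnormSq_nonneg (by positivity : 0 < κ / 8)
    (by positivity) hXs hgauss (integral_exp_neg_mul_cnormSq_le _) hZ hT k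
  simpa only [gibbsGen, Zgen, cnorm_pow_two_mul] using h

lemma add_pow_le_mul_sum_pow {c C N a b e : ℝ} (hc : 0 ≤ c) (hC : 0 ≤ C) (hN : 1 ≤ N)
    (ha : 0 ≤ a) (k : ℕ) :
    (c * N * (a + b ^ 2 + 1 + e ^ 2)) ^ k + C ≤
      (4 ^ k * c ^ k + C + 1) * N ^ k * (a ^ k + b ^ (2 * k) + 1 + e ^ (2 * k)) := by
  have hP : 1 ≤ a ^ k + b ^ (2 * k) + 1 + e ^ (2 * k) := by
    have : 0 ≤ a ^ k := by positivity
    rw [pow_mul, pow_mul]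
    nlinarith [pow_nonneg (sq_nonneg b) k, pow_nonneg (sq_nonneg e) k]
  have hNk : 1 ≤ N ^ k := one_le_pow₀ hN
  have hW := add_four_pow_le ha (sq_nonneg b) zero_le_one (sq_nonneg e) k
  rw [one_pow, ← pow_mul, ← pow_mul] at hW
  rw [mul_pow, mul_pow]
  nlinarith [mul_le_mul_of_nonneg_left hW (by positivity : 0 ≤ c ^ k * N ^ k),
    mul_le_mul hNk hP zero_le_one (by positivity),
    mul_nonneg (by positivity : 0 ≤ N ^ k) (zero_le_one.trans hP)]

lemma gibbsGen_cnorm_pow_of_eq_zero {n M : ℕ} {u : ℝ → ℝ} {φ ψ : (Fin n → ℝ) → ℝ}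
    {h κ lam η : ℝ} {G : Fin M → Fin 0 → ℝ} {z : Fin M → ℝ} {k : ℕ} (hk : k ≠ 0) :
    gibbsGen u φ ψ h κ lam η G z (fun σv => cnorm σv ^ (2 * k)) = 0 := by
  simp [gibbsGen, cnorm, hk]

lemma abs_le_of_le_min {x η0 κ d : ℝ} (hd : 0 < d)
    (hx : |x| ≤ min η0 (min (κ / (4 * d)) (1 / 2))) : |x| ≤ η0 ∧ |x| ≤ 1 ∧ |x| * d ≤ κ / 4 := by
  simp only [le_min_iff] at hx
  refine ⟨hx.1, by linarith, ?_⟩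
  rw [← le_div_iff₀ hd, div_div]
  exact hx.2.1

theorem gibbs_norm_moment_bound_general
    (n : ℕ) (α κ h Δs d η0 : ℝ)
    (hα : 0 < α) (hκ : 0 < κ) (hd : 0 < d) (hη0 : 0 < η0)
    (u : ℝ → ℝ) (hdiff : Differentiable ℝ u)
    (φ ψ : (Fin n → ℝ) → ℝ) (hG : Growth n u φ ψ d η0 α)
    (k : ℕ) (hk : 1 ≤ k) :
    ∃ ε, 0 < ε ∧ ε < 1 ∧ ∃ K ≥ (1 : ℝ), ∀ N : ℕ,
      ∀ᵐ gz ∂(disorder ⌊α * (N : ℝ)⌋₊ N Δs),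
        ∀ lam η : ℝ, |lam| ≤ ε → |η| ≤ ε →
          gibbsGen u φ ψ h κ lam η gz.1 gz.2 (fun σv => (cnorm σv) ^ (2 * k)) ≤
            K * (N : ℝ) ^ k * ((Real.sqrt (∑ j, (gz.2 j / Real.sqrt (N : ℝ)) ^ 2)) ^ (2 * k) +
              (opNorm (fun p i => gz.1 p i / Real.sqrt (N : ℝ))) ^ (2 * k) + 1 + h ^ (2 * k)) := by
  obtain ⟨hu, -, -, -, hφ, hψ, hφc, hψc, -, -, hG3⟩ := hG
  have hmom := momentScale_nonneg (n := n) (h := h) hα.le hκ hd.le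
  refine ⟨min η0 (min (κ / (4 * d)) (1 / 2)), by positivity,
    (min_le_right _ _).trans_lt ((min_le_right _ _).trans_lt (by norm_num)),
    4 ^ k * momentScale n α κ h d ^ k + k.factorial / (κ / 8) ^ k + 1,
    le_add_of_nonneg_left (by positivity), fun N => ae_of_all _ fun gz lam η hlam hη => ?_⟩
  obtain ⟨-, hlam1, hlamd⟩ := abs_le_of_le_min hd hlam
  obtain ⟨hηη0, hη1, -⟩ := abs_le_of_le_min hd hη
  rcases Nat.eq_zero_or_pos N with rfl | hN
  · rw [gibbsGen_cnorm_pow_of_eq_zero (by omega)]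
    simp [zero_pow (by omega : k ≠ 0)]
  refine (gibbsGen_cnorm_pow_le hN.ne' (Nat.floor_le (by positivity)) hα.le hκ hd.le
    hdiff.continuous hφc.continuous hψc.continuous (fun s => (hu s).2) hφ hψ hG3
    hlam1 hlamd hη1 hηη0 k).trans ?_
  rw [pow_mul, sq_sqrt (by positivity)]
  exact add_pow_le_mul_sum_pow hmom (by positivity) (by exact_mod_cast hN) (by positivity) k

/-- Lemma 4.4: for `k ≥ 1` there are `0 < ε < 1` and `K ≥ 1`
such that, a.s. in `(G,z)`, for `|λ|, |η| ≤ ε`,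
`⟨‖σ⃗‖^{2k}⟩_{λ,η} ≤ K N^k (‖z̄‖^{2k} + ‖Ḡ‖_op^{2k} + 1 + h^{2k})`. -/
theorem gibbs_norm_moment_bound
    (n : ℕ) (hn : 1 ≤ n) (α κ h Δs d η0 : ℝ)
    (hα : 0 < α) (hκ : 0 < κ) (hΔs : 0 ≤ Δs) (hd : 0 < d) (hη0 : 0 < η0)
    (u : ℝ → ℝ) (hdiff : Differentiable ℝ u)
    (φ ψ : (Fin n → ℝ) → ℝ) (hG : Growth n u φ ψ d η0 α)
    (k : ℕ) (hk : 1 ≤ k) :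
    ∃ ε, 0 < ε ∧ ε < 1 ∧ ∃ K ≥ (1 : ℝ), ∀ N : ℕ,
      ∀ᵐ gz ∂(disorder ⌊α * (N : ℝ)⌋₊ N Δs),
        ∀ lam η : ℝ, |lam| ≤ ε → |η| ≤ ε →
          gibbsGen u φ ψ h κ lam η gz.1 gz.2 (fun σv => (cnorm σv) ^ (2 * k)) ≤
            K * (N : ℝ) ^ k * ((Real.sqrt (∑ j, (gz.2 j / Real.sqrt (N : ℝ)) ^ 2)) ^ (2 * k) +
              (opNorm (fun p i => gz.1 p i / Real.sqrt (N : ℝ))) ^ (2 * k) + 1 + h ^ (2 * k)) :=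
  gibbs_norm_moment_bound_general n α κ h Δs d η0 hα hκ hd hη0 u hdiff φ ψ hG k hk

end
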